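/- arXiv:1403.5955 — 4 statements merged into one kernel-verified Lean document; each statement's English description precedes it below -/
import Mathlib

section
/- PAA(X) is a closed linear subspace of BC(ℝ, X); consequently PAA(X), equipped with the sup norm ‖·‖_∞, is a Banach space. -/
open Filter Topology MeasureTheory

/-- Almost automorphic functions. -/
def AlmostAutomorphic {X : Type*} [NormedAddCommGroup X] (f : ℝ → X) : Prop :=
  Continuous f ∧
    ∀ s' : ℕ → ℝ, ∃ (k : ℕ → ℕ) (g : ℝ → X), StrictMono k ∧
      (∀ t : ℝ, Tendsto (fun n => f (t + s' (k n))) atTop (𝓝 (g t))) ∧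
      (∀ t : ℝ, Tendsto (fun n => g (t - s' (k n))) atTop (𝓝 (f t)))

/-- The ergodic space `PAP₀(X)`: bounded continuous functions whose mean
`(1/(2r)) ∫_{-r}^r ‖φ(s)‖ ds` tends to `0` as `r → ∞`. -/
def PAPZero {X : Type*} [NormedAddCommGroup X] (f : ℝ → X) : Prop :=
  Continuous f ∧ (∃ C : ℝ, ∀ t : ℝ, ‖f t‖ ≤ C) ∧
    Tendsto (fun r : ℝ => (1 / (2 * r)) * ∫ s in (-r)..r, ‖f s‖) atTop (𝓝 0)

/-- Pseudo-almost automorphic functions: `f = g + φ` with `g ∈ AA(X)`, `φ ∈ PAP₀(X)`. -/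
def PseudoAlmostAutomorphic {X : Type*} [NormedAddCommGroup X] (f : ℝ → X) : Prop :=
  ∃ g φ : ℝ → X, AlmostAutomorphic g ∧ PAPZero φ ∧ ∀ t : ℝ, f t = g t + φ t


section Lemmas
variable {X Y : Type*} [NormedAddCommGroup X] [NormedAddCommGroup Y]

lemma aa_comp {F : X → Y} (hF : Continuous F) {f : ℝ → X} (hf : AlmostAutomorphic f) :
    AlmostAutomorphic (fun t => F (f t)) := by
  obtain ⟨hc, h⟩ := hf
  refine ⟨hF.comp hc, fun s' => ?_⟩
  obtain ⟨k, g, hk, h1, h2⟩ := h s'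
  exact ⟨k, fun t => F (g t), hk, fun t => (hF.tendsto _).comp (h1 t),
    fun t => (hF.tendsto _).comp (h2 t)⟩

lemma aa_zero : AlmostAutomorphic (fun _ : ℝ => (0 : X)) := by
  refine ⟨continuous_const, fun s' => ⟨id, fun _ => 0, strictMono_id, ?_, ?_⟩⟩ <;>
    exact fun t => tendsto_const_nhds

lemma aa_neg {f : ℝ → X} (hf : AlmostAutomorphic f) : AlmostAutomorphic (fun t => -f t) :=
  aa_comp continuous_neg hf

lemma aa_add {f g : ℝ → X} (hf : AlmostAutomorphic f) (hg : AlmostAutomorphic g) :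
    AlmostAutomorphic (fun t => f t + g t) := by
  obtain ⟨hcf, h1⟩ := hf
  obtain ⟨hcg, h2⟩ := hg
  refine ⟨hcf.add hcg, fun s' => ?_⟩
  obtain ⟨k₁, F, hk₁, hF1, hF2⟩ := h1 s'
  obtain ⟨k₂, G, hk₂, hG1, hG2⟩ := h2 (s' ∘ k₁)
  refine ⟨k₁ ∘ k₂, fun t => F t + G t, hk₁.comp hk₂, fun t => ?_, fun t => ?_⟩
  · exact ((hF1 t).comp hk₂.tendsto_atTop).add (hG1 t)
  · exact ((hF2 t).comp hk₂.tendsto_atTop).add (hG2 t)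

lemma aa_sub {f g : ℝ → X} (hf : AlmostAutomorphic f) (hg : AlmostAutomorphic g) :
    AlmostAutomorphic (fun t => f t - g t) := by
  simpa [sub_eq_add_neg] using aa_add hf (aa_neg hg)

lemma aa_smul {𝕜 : Type*} [NormedField 𝕜] [NormedSpace 𝕜 X] (c : 𝕜) {f : ℝ → X}
    (hf : AlmostAutomorphic f) : AlmostAutomorphic (fun t => c • f t) :=
  aa_comp (continuous_const_smul c) hf

lemma aa_bounded {f : ℝ → X} (hf : AlmostAutomorphic f) : ∃ C, ∀ t, ‖f t‖ ≤ C := by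
  by_contra h
  push_neg at h
  choose t ht using fun n : ℕ => h n
  obtain ⟨k, g, hk, h1, _⟩ := hf.2 t
  have hlim : Tendsto (fun n => ‖f (0 + t (k n))‖) atTop (𝓝 ‖g 0‖) :=
    ((continuous_norm.tendsto _).comp (h1 0))
  have htop : Tendsto (fun n => ‖f (0 + t (k n))‖) atTop atTop := by
    apply tendsto_atTop_mono (fun n => ?_) tendsto_natCast_atTop_atTop
    simpa using le_trans (Nat.cast_le.mpr hk.le_apply) (ht (k n)).le
  exact not_tendsto_atTop_of_tendsto_nhds hlim htop

end Lemmas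
section L2
variable {X : Type*} [NormedAddCommGroup X]

lemma papzero_zero : PAPZero (fun _ : ℝ => (0 : X)) := by
  refine ⟨continuous_const, ⟨0, fun t => by simp⟩, ?_⟩
  simpa using tendsto_const_nhds

lemma avg_nonneg_eventually (f : ℝ → X) :
    ∀ᶠ r : ℝ in atTop, 0 ≤ (1 / (2 * r)) * ∫ s in (-r)..r, ‖f s‖ := by
  filter_upwards [eventually_ge_atTop (0 : ℝ)] with r hr
  apply mul_nonneg (by positivity)
  exact intervalIntegral.integral_nonneg (by linarith) (fun x _ => norm_nonneg _)

/-- key mean comparison: if `‖f t‖ ≤ ‖g t‖ + c` pointwise with `f, g` continuous, then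
  the average of `‖f‖` is ≤ average of `‖g‖` + c for r > 0. -/
lemma avg_le_avg_add {Y : Type*} [NormedAddCommGroup Y] {f : ℝ → X} {g : ℝ → Y} {c : ℝ}
    (hf : Continuous f) (hg : Continuous g)
    (h : ∀ t, ‖f t‖ ≤ ‖g t‖ + c) {r : ℝ} (hr : 0 < r) :
    (1 / (2 * r)) * ∫ s in (-r)..r, ‖f s‖ ≤
      ((1 / (2 * r)) * ∫ s in (-r)..r, ‖g s‖) + c := by
  have hint : ∫ s in (-r)..r, ‖f s‖ ≤ ∫ s in (-r)..r, (‖g s‖ + c) := by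
    apply intervalIntegral.integral_mono_on (by linarith)
      (hf.norm.intervalIntegrable _ _) ((hg.norm.add continuous_const).intervalIntegrable _ _)
    exact fun x _ => h x
  have h2 : ∫ s in (-r)..r, (‖g s‖ + c) = (∫ s in (-r)..r, ‖g s‖) + 2 * r * c := by
    rw [intervalIntegral.integral_add (hg.norm.intervalIntegrable _ _)
      intervalIntegrable_const, intervalIntegral.integral_const, smul_eq_mul]
    ring
  have h2r : (0:ℝ) < 2 * r := by linarith
  calc (1 / (2 * r)) * ∫ s in (-r)..r, ‖f s‖
      ≤ (1 / (2 * r)) * ((∫ s in (-r)..r, ‖g s‖) + 2 * r * c) := by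
        apply mul_le_mul_of_nonneg_left _ (by positivity)
        rw [← h2]; exact hint
    _ = ((1 / (2 * r)) * ∫ s in (-r)..r, ‖g s‖) + (1 / (2 * r)) * (2 * r * c) := by
        rw [mul_add]
    _ = ((1 / (2 * r)) * ∫ s in (-r)..r, ‖g s‖) + c := by
        congr 1
        field_simp
  
lemma papzero_add {f g : ℝ → X} (hf : PAPZero f) (hg : PAPZero g) :
    PAPZero (fun t => f t + g t) := by
  obtain ⟨hfc, ⟨Cf, hCf⟩, hfm⟩ := hf
  obtain ⟨hgc, ⟨Cg, hCg⟩, hgm⟩ := hg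
  refine ⟨hfc.add hgc, ⟨Cf + Cg, fun t => (norm_add_le _ _).trans (add_le_add (hCf t) (hCg t))⟩, ?_⟩
  have hsum := hfm.add hgm
  rw [add_zero] at hsum
  apply tendsto_of_tendsto_of_tendsto_of_le_of_le' tendsto_const_nhds hsum
    (avg_nonneg_eventually _)
  filter_upwards [eventually_gt_atTop (0 : ℝ)] with r hr
  have key : (1 / (2 * r)) * ∫ s in (-r)..r, ‖f s + g s‖ ≤
      (1 / (2 * r)) * ∫ s in (-r)..r, (‖f s‖ + ‖g s‖) := by
    apply mul_le_mul_of_nonneg_left _ (by positivity)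
    apply intervalIntegral.integral_mono_on (by linarith)
      ((hfc.add hgc).norm.intervalIntegrable _ _)
      ((hfc.norm.add hgc.norm).intervalIntegrable _ _)
    exact fun x _ => norm_add_le _ _
  refine key.trans (le_of_eq ?_)
  rw [intervalIntegral.integral_add (hfc.norm.intervalIntegrable _ _)
    (hgc.norm.intervalIntegrable _ _)]
  ring

lemma papzero_smul {𝕜 : Type*} [NormedField 𝕜] [NormedSpace 𝕜 X] (c : 𝕜) {f : ℝ → X}
    (hf : PAPZero f) : PAPZero (fun t => c • f t) := by
  obtain ⟨hfc, ⟨Cf, hCf⟩, hfm⟩ := hf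
  refine ⟨(continuous_const_smul c).comp hfc, ⟨‖c‖ * Cf, fun t => by
    rw [norm_smul]; exact mul_le_mul_of_nonneg_left (hCf t) (norm_nonneg _)⟩, ?_⟩
  have : (fun r : ℝ => (1 / (2 * r)) * ∫ s in (-r)..r, ‖c • f s‖) =
      fun r : ℝ => ‖c‖ * ((1 / (2 * r)) * ∫ s in (-r)..r, ‖f s‖) := by
    funext r
    simp only [norm_smul, intervalIntegral.integral_const_mul]
    ring
  rw [this]
  simpa using hfm.const_mul ‖c‖

lemma papzero_neg {f : ℝ → X} (hf : PAPZero f) : PAPZero (fun t => -f t) := by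
  obtain ⟨hfc, ⟨Cf, hCf⟩, hfm⟩ := hf
  exact ⟨hfc.neg, ⟨Cf, fun t => by simpa using hCf t⟩, by simpa using hfm⟩

lemma papzero_sub {f g : ℝ → X} (hf : PAPZero f) (hg : PAPZero g) :
    PAPZero (fun t => f t - g t) := by
  simpa [sub_eq_add_neg] using papzero_add hf (papzero_neg hg)

/-- PAP₀ is closed under uniform limits. -/
lemma papzero_of_tendstoUniformly {F : ℕ → ℝ → X} {f : ℝ → X}
    (hF : ∀ n, PAPZero (F n)) (h : TendstoUniformly F f atTop) : PAPZero f := by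
  have hfc : Continuous f := h.continuous (Eventually.of_forall fun n => (hF n).1).frequently
  have hb : ∃ C, ∀ t, ‖f t‖ ≤ C := by
    obtain ⟨N, hN⟩ := (Metric.tendstoUniformly_iff.mp h 1 one_pos).exists
    obtain ⟨C, hC⟩ := (hF N).2.1
    refine ⟨C + 1, fun t => ?_⟩
    have h1 := hN t
    rw [dist_eq_norm] at h1
    calc ‖f t‖ = ‖F N t + (f t - F N t)‖ := by rw [add_sub_cancel]
      _ ≤ ‖F N t‖ + ‖f t - F N t‖ := norm_add_le _ _
      _ ≤ C + 1 := add_le_add (hC t) h1.le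
  refine ⟨hfc, hb, ?_⟩
  rw [NormedAddCommGroup.tendsto_nhds_zero]
  intro ε hε
  obtain ⟨N, hN⟩ := (Metric.tendstoUniformly_iff.mp h (ε/4) (by linarith)).exists
  have hNm := (hF N).2.2
  rw [NormedAddCommGroup.tendsto_nhds_zero] at hNm
  filter_upwards [eventually_gt_atTop (0:ℝ), hNm (ε/4) (by linarith),
    avg_nonneg_eventually (X := X) f] with r hr hNr havg
  have key : (1 / (2 * r)) * ∫ s in (-r)..r, ‖f s‖ ≤
      ((1 / (2 * r)) * ∫ s in (-r)..r, ‖F N s‖) + ε/4 := by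
    apply avg_le_avg_add hfc (hF N).1 _ hr
    intro t
    have := hN t
    rw [dist_eq_norm] at this
    calc ‖f t‖ = ‖F N t + (f t - F N t)‖ := by rw [add_sub_cancel]
      _ ≤ ‖F N t‖ + ‖f t - F N t‖ := norm_add_le _ _
      _ ≤ ‖F N t‖ + ε/4 := by linarith
  rw [Real.norm_eq_abs, abs_of_nonneg havg]
  have : (1 / (2 * r)) * ∫ s in (-r)..r, ‖F N s‖ < ε/4 := by
    have := hNr
    rw [Real.norm_eq_abs] at this
    exact lt_of_abs_lt this
  linarith

end L2
/-- From vanishing mean, find windows of radius `n+1`, centered far out, with small integral. -/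
lemma exists_small_window {u : ℝ → ℝ} (hc : Continuous u) (hnn : ∀ t, 0 ≤ u t)
    (hm : Tendsto (fun r : ℝ => (1 / (2 * r)) * ∫ s in (-r)..r, u s) atTop (𝓝 0)) (n : ℕ) :
    ∃ σ : ℝ, ((n : ℝ) + 1) ≤ σ ∧
      ∫ s in (σ - ((n : ℝ) + 1))..(σ + ((n : ℝ) + 1)), u s ≤ 4 / ((n : ℝ) + 1) := by
  set m : ℝ := (n : ℝ) + 1 with hm_def
  have hm0 : 0 < m := by positivity
  have hev := (NormedAddCommGroup.tendsto_nhds_zero.mp hm) (1 / (2 * m ^ 2)) (by positivity)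
  obtain ⟨r, hrav, hr4m⟩ := (hev.and (eventually_ge_atTop (4 * m))).exists
  have hr0 : 0 < r := by nlinarith
  -- total integral bound
  have hI : ∫ s in (-r)..r, u s ≤ r / m ^ 2 := by
    have h1 : (1 / (2 * r)) * ∫ s in (-r)..r, u s < 1 / (2 * m ^ 2) := by
      have := hrav
      rw [Real.norm_eq_abs] at this
      exact lt_of_abs_lt this
    rw [one_div_mul_eq_div, div_lt_div_iff₀ (by positivity) (by positivity)] at h1
    rw [le_div_iff₀ (by positivity)]
    nlinarith [h1]
  set N : ℕ := ⌊r / (2 * m)⌋₊ with hN_def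
  have hNle : 2 * m * N ≤ r := by
    have h := Nat.floor_le (a := r / (2 * m)) (by positivity)
    rw [le_div_iff₀ (by positivity)] at h
    nlinarith [h]
  have hNge : r ≤ 4 * m * N := by
    have h1 : r / (2 * m) - 1 < (N : ℝ) := Nat.sub_one_lt_floor _
    have h2 : r - 2 * m < 2 * m * N := by
      rw [div_sub' (c := 2 * m) (by positivity), div_lt_iff₀ (by positivity)] at h1
      nlinarith [h1]
    nlinarith
  have hNpos : 0 < N := by
    rcases Nat.eq_zero_or_pos N with h | h
    · rw [h] at hNge; push_cast at hNge; nlinarith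
    · exact h
  -- block decomposition
  have hadj : ∑ j ∈ Finset.range N, ∫ s in (2 * m * j)..(2 * m * (j + 1)), u s
      = ∫ s in (2 * m * (0 : ℕ) : ℝ)..(2 * m * (N : ℕ)), u s := by
    have := intervalIntegral.sum_integral_adjacent_intervals
      (a := fun j : ℕ => 2 * m * j) (n := N) (μ := volume) (f := u)
      (fun k _ => hc.intervalIntegrable _ _)
    convert this using 2 <;> push_cast <;> ring_nf
  have hsub : ∫ s in (2 * m * (0 : ℕ) : ℝ)..(2 * m * (N : ℕ)), u s ≤ ∫ s in (-r)..r, u s := by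
    apply intervalIntegral.integral_mono_interval (by simp; linarith) (by simp; positivity)
      (by push_cast; linarith) (ae_of_all _ fun x => hnn x) (hc.intervalIntegrable _ _)
  -- some block is small
  have hexists : ∃ j ∈ Finset.range N, ∫ s in (2 * m * j)..(2 * m * (j + 1)), u s ≤ 4 / m := by
    by_contra hcon
    push_neg at hcon
    have hlt : (N : ℝ) * (4 / m) < ∑ j ∈ Finset.range N,
        ∫ s in (2 * m * j)..(2 * m * (j + 1)), u s := by
      have := Finset.sum_lt_sum_of_nonempty (s := Finset.range N)
        (f := fun _ : ℕ => 4 / m)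
        (g := fun j : ℕ => ∫ s in (2 * m * j)..(2 * m * (j + 1)), u s)
        (Finset.nonempty_range_iff.mpr hNpos.ne') (fun i hi => hcon i hi)
      simpa [Finset.sum_const, Finset.card_range, nsmul_eq_mul] using this
    have hge : r / m ^ 2 ≤ (N : ℝ) * (4 / m) := by
      rw [div_le_iff₀ (by positivity)]
      have : (N:ℝ) * (4/m) * m ^ 2 = 4 * m * N := by field_simp
      rw [this]
      exact hNge
    rw [hadj] at hlt
    have := hsub.trans hI
    linarith
  obtain ⟨j, _, hj⟩ := hexists
  refine ⟨2 * m * j + m, by nlinarith [show (0:ℝ) ≤ (j:ℝ) from Nat.cast_nonneg j], ?_⟩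
  have e1 : 2 * m * j + m - m = 2 * m * (j : ℝ) := by ring
  have e2 : 2 * m * j + m + m = 2 * m * ((j : ℝ) + 1) := by ring
  rw [hm_def] at *
  calc ∫ s in (2*m*j + m - m)..(2*m*j + m + m), u s
      = ∫ s in (2 * m * (j:ℝ))..(2 * m * ((j:ℝ) + 1)), u s := by rw [e1, e2]
    _ ≤ 4 / m := by push_cast at hj ⊢; convert hj using 2

/-- Core uniqueness lemma: a nonnegative almost automorphic function with vanishing mean is 0. -/
lemma aa_papzero_eq_zero {u : ℝ → ℝ} (hAA : AlmostAutomorphic u) (hnn : ∀ t, 0 ≤ u t)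
    (hP : PAPZero u) : ∀ t, u t = 0 := by
  obtain ⟨hc, ⟨C, hC⟩, hm⟩ := hP
  have hC' : ∀ t, u t ≤ C := fun t => (le_abs_self _).trans (hC t)
  have hmean : Tendsto (fun r : ℝ => (1 / (2 * r)) * ∫ s in (-r)..r, u s) atTop (𝓝 0) := by
    have : (fun r : ℝ => (1 / (2 * r)) * ∫ s in (-r)..r, ‖u s‖)
        = fun r : ℝ => (1 / (2 * r)) * ∫ s in (-r)..r, u s := by
      funext r
      congr 1
      exact intervalIntegral.integral_congr fun x _ => Real.norm_of_nonneg (hnn x)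
    rwa [this] at hm
  choose σ hσ1 hσ2 using exists_small_window hc hnn hmean
  obtain ⟨k, g, hk, h1, h2⟩ := hAA.2 σ
  -- properties of g
  have hgnn : ∀ t, 0 ≤ g t := fun t => ge_of_tendsto' (h1 t) fun n => hnn _
  have hgC : ∀ t, g t ≤ C := fun t => le_of_tendsto' (h1 t) fun n => hC' _
  have hgnorm : ∀ t, ‖g t‖ ≤ C := fun t => by
    rw [Real.norm_of_nonneg (hgnn t)]; exact hgC t
  have hgmeas : AEStronglyMeasurable g (volume : Measure ℝ) :=
    aestronglyMeasurable_of_tendsto_ae atTop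
      (fun n => (hc.comp (continuous_id.add continuous_const)).aestronglyMeasurable)
      (ae_of_all _ fun t => h1 t)
  have hgint : ∀ a b : ℝ, IntervalIntegrable g volume a b := by
    intro a b
    rw [intervalIntegrable_iff]
    exact Measure.integrableOn_of_bounded (measure_Ioc_lt_top).ne hgmeas
      (ae_of_all _ fun t => hgnorm t)
  have hσpos : ∀ n, (0:ℝ) ≤ σ n := fun n => le_trans (by positivity) (hσ1 n)
  -- Step A : ∫ g over symmetric intervals vanishes
  have stepA : ∀ T : ℝ, 0 ≤ T → (∫ t in (-T)..T, g t) = 0 := by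
    intro T hT
    refine le_antisymm ?_ (intervalIntegral.integral_nonneg (by linarith) fun x _ => hgnn x)
    have hDCT : Tendsto (fun n => ∫ t in (-T)..T, u (t + σ (k n))) atTop
        (𝓝 (∫ t in (-T)..T, g t)) := by
      apply intervalIntegral.tendsto_integral_filter_of_dominated_convergence (fun _ => C)
        (Eventually.of_forall fun n =>
          ((hc.comp (continuous_id.add continuous_const)).aestronglyMeasurable).restrict)
        (Eventually.of_forall fun n => (ae_of_all _ fun x _ => by
          simp only [Function.comp_apply, id_eq]
          rw [Real.norm_of_nonneg (hnn _)]; exact hC' _))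
        intervalIntegrable_const (ae_of_all _ fun x _ => h1 x)
    have h4 : Tendsto (fun n : ℕ => 4 / ((n:ℝ) + 1)) atTop (𝓝 0) := by
      have := (tendsto_inv_atTop_zero (𝕜 := ℝ)).const_mul (4:ℝ) |>.comp
        (tendsto_atTop_add_const_right atTop (1:ℝ) tendsto_natCast_atTop_atTop)
      simpa [Function.comp_def, div_eq_mul_inv, mul_zero] using this
    refine le_of_tendsto_of_tendsto hDCT h4 ?_
    filter_upwards [tendsto_natCast_atTop_atTop.eventually_ge_atTop T] with n hn
    have hkn : (n:ℝ) ≤ (k n : ℝ) := Nat.cast_le.mpr hk.le_apply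
    have hTkn : T ≤ (k n : ℝ) + 1 := by linarith
    calc ∫ t in (-T)..T, u (t + σ (k n))
        = ∫ t in (-T + σ (k n))..(T + σ (k n)), u t :=
          intervalIntegral.integral_comp_add_right u (σ (k n))
      _ ≤ ∫ t in (σ (k n) - ((k n : ℝ) + 1))..(σ (k n) + ((k n : ℝ) + 1)), u t := by
          apply intervalIntegral.integral_mono_interval (by linarith) (by linarith) (by linarith)
            (ae_of_all _ fun x => hnn x) (hc.intervalIntegrable _ _)
      _ ≤ 4 / ((k n : ℝ) + 1) := hσ2 (k n)
      _ ≤ 4 / ((n : ℝ) + 1) := by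
          apply div_le_div_of_nonneg_left (by norm_num) (by positivity) (by linarith)
  -- Step B : ∫ u over symmetric intervals vanishes
  have stepB : ∀ T : ℝ, 0 ≤ T → (∫ t in (-T)..T, u t) = 0 := by
    intro T hT
    have hmeas : ∀ n : ℕ, AEStronglyMeasurable (fun t => g (t - σ (k n))) (volume : Measure ℝ) := by
      intro n
      exact ((measurePreserving_sub_right volume (σ (k n))).aestronglyMeasurable_comp_iff
        (MeasurableEquiv.subRight (σ (k n))).measurableEmbedding).mpr hgmeas
    have hDCT : Tendsto (fun n => ∫ t in (-T)..T, g (t - σ (k n))) atTop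
        (𝓝 (∫ t in (-T)..T, u t)) := by
      apply intervalIntegral.tendsto_integral_filter_of_dominated_convergence (fun _ => C)
        (Eventually.of_forall fun n => (hmeas n).restrict)
        (Eventually.of_forall fun n => (ae_of_all _ fun x _ => hgnorm _))
        intervalIntegrable_const (ae_of_all _ fun x _ => h2 x)
    have hzero : ∀ n : ℕ, (∫ t in (-T)..T, g (t - σ (k n))) = 0 := by
      intro n
      rw [intervalIntegral.integral_comp_sub_right g (σ (k n))]
      refine le_antisymm ?_ (intervalIntegral.integral_nonneg (by linarith [hσpos (k n)])
        fun x _ => hgnn x)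
      calc ∫ t in (-T - σ (k n))..(T - σ (k n)), g t
          ≤ ∫ t in (-(T + σ (k n)))..(T + σ (k n)), g t := by
            apply intervalIntegral.integral_mono_interval (by linarith [hσpos (k n)])
              (by linarith [hσpos (k n)]) (by linarith [hσpos (k n)])
              (ae_of_all _ fun x => hgnn x) (hgint _ _)
        _ = 0 := stepA (T + σ (k n)) (by linarith [hσpos (k n)])
    rw [show (fun n => ∫ t in (-T)..T, g (t - σ (k n))) = fun _ : ℕ => (0:ℝ) from
      funext hzero] at hDCT
    exact tendsto_nhds_unique hDCT tendsto_const_nhds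
  -- conclusion by continuity
  intro t₀
  by_contra hne
  have hpos : 0 < u t₀ := (hnn t₀).lt_of_ne (Ne.symm hne)
  obtain ⟨δ, hδ, hball⟩ := Metric.eventually_nhds_iff.mp
    (((hc.tendsto t₀)).eventually (eventually_gt_nhds (half_lt_self hpos)))
  set T : ℝ := |t₀| + δ with hT_def
  have h0 : 0 < ∫ s in (t₀ - δ)..(t₀ + δ), u s := by
    apply intervalIntegral.intervalIntegral_pos_of_pos_on (hc.intervalIntegrable _ _)
      (fun x hx => ?_) (by linarith)
    have : dist x t₀ < δ := by
      rw [Real.dist_eq, abs_lt]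
      exact ⟨by linarith [hx.1], by linarith [hx.2]⟩
    linarith [hball this]
  have hmono : (∫ s in (t₀ - δ)..(t₀ + δ), u s) ≤ ∫ s in (-T)..T, u s := by
    apply intervalIntegral.integral_mono_interval ?_ (by linarith) ?_
      (ae_of_all _ fun x => hnn x) (hc.intervalIntegrable _ _)
    · have := neg_abs_le t₀; simp only [hT_def]; linarith
    · have := le_abs_self t₀; simp only [hT_def]; linarith
  rw [stepB T (by positivity)] at hmono
  linarith

section NormLemma
variable {X : Type*} [NormedAddCommGroup X]

/-- The AA part of a PAA decomposition is dominated by the sup of the function. -/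
lemma aa_part_norm_le {f g φ : ℝ → X} (hg : AlmostAutomorphic g) (hφ : PAPZero φ)
    (hsum : ∀ t, f t = g t + φ t) {C : ℝ} (hC : ∀ t, ‖f t‖ ≤ C) : ∀ t, ‖g t‖ ≤ C := by
  intro t₀
  by_contra hcon
  push_neg at hcon
  set ε : ℝ := ‖g t₀‖ - C with hε_def
  have hε : 0 < ε := sub_pos.mpr hcon
  set v : ℝ → ℝ := fun t => max 0 (ε / 2 - ‖g t - g t₀‖) with hv_def
  have hFcont : Continuous fun x : X => max 0 (ε / 2 - ‖x - g t₀‖) :=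
    continuous_const.max (continuous_const.sub ((continuous_id.sub continuous_const).norm))
  have hvAA : AlmostAutomorphic v := aa_comp hFcont hg
  have hvcont : Continuous v := hFcont.comp hg.1
  have hvnn : ∀ t, 0 ≤ v t := fun t => le_max_left _ _
  have hvle : ∀ t, v t ≤ ‖φ t‖ := by
    intro t
    apply max_le (norm_nonneg _)
    have h1 : ‖f t - g t₀‖ ≤ ‖φ t‖ + ‖g t - g t₀‖ := by
      calc ‖f t - g t₀‖ = ‖φ t + (g t - g t₀)‖ := by
            congr 1; rw [hsum t]; abel
        _ ≤ ‖φ t‖ + ‖g t - g t₀‖ := norm_add_le _ _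
    have h2 : ε ≤ ‖f t - g t₀‖ := by
      have h3 := norm_sub_norm_le (g t₀) (f t)
      rw [norm_sub_rev] at h3
      have := hC t
      simp only [hε_def]
      linarith
    linarith
  have hvP : PAPZero v := by
    refine ⟨hvcont, ⟨ε / 2, fun t => ?_⟩, ?_⟩
    · rw [Real.norm_of_nonneg (hvnn t)]
      exact max_le (by positivity) (by linarith [norm_nonneg (g t - g t₀)])
    · obtain ⟨hφc, ⟨Cφ, hCφ⟩, hφm⟩ := hφ
      apply tendsto_of_tendsto_of_tendsto_of_le_of_le' tendsto_const_nhds hφm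
        (avg_nonneg_eventually v)
      filter_upwards [eventually_gt_atTop (0 : ℝ)] with r hr
      have hb := avg_le_avg_add (f := v) (g := φ) (c := 0) hvcont hφc
        (fun t => by rw [Real.norm_of_nonneg (hvnn t)]; simpa using hvle t) hr
      simpa using hb
  have hzero := aa_papzero_eq_zero hvAA hvnn hvP t₀
  rw [hv_def] at hzero
  simp only [sub_self, norm_zero, sub_zero] at hzero
  rw [max_eq_right (by positivity : (0:ℝ) ≤ ε / 2)] at hzero
  linarith
end NormLemma

/-- Iterated composition of a family of extractions. -/
def chainComp (K : ℕ → (ℕ → ℕ) → (ℕ → ℕ)) : ℕ → (ℕ → ℕ)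
  | 0 => id
  | j + 1 => chainComp K j ∘ K j (chainComp K j)

section AAClosed
variable {X : Type*} [NormedAddCommGroup X] [CompleteSpace X]

/-- AA is closed under uniform limits. -/
lemma aa_of_tendstoUniformly {G : ℕ → ℝ → X} {g : ℝ → X}
    (hG : ∀ j, AlmostAutomorphic (G j)) (h : TendstoUniformly G g atTop) :
    AlmostAutomorphic g := by
  have hgc : Continuous g := h.continuous (Eventually.of_forall fun j => (hG j).1).frequently
  refine ⟨hgc, fun s' => ?_⟩
  -- stage-wise extraction
  have key : ∀ (j : ℕ) (cc : ℕ → ℕ), ∃ (k : ℕ → ℕ) (hh : ℝ → X), StrictMono k ∧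
      (∀ t : ℝ, Tendsto (fun n => G j (t + s' (cc (k n)))) atTop (𝓝 (hh t))) ∧
      (∀ t : ℝ, Tendsto (fun n => hh (t - s' (cc (k n)))) atTop (𝓝 (G j t))) := by
    intro j cc
    obtain ⟨k, hh, hk, h1, h2⟩ := (hG j).2 (fun m => s' (cc m))
    exact ⟨k, hh, hk, h1, h2⟩
  choose K H hKmono hH1 hH2 using key
  set c : ℕ → ℕ → ℕ := chainComp K with hc_def
  have hstep : ∀ j n, c (j + 1) n = c j (K j (c j) n) := fun j n => rfl
  have cmono : ∀ j, StrictMono (c j) := by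
    intro j
    induction j with
    | zero => exact strictMono_id
    | succ j ih => exact ih.comp (hKmono j (c j))
  -- splitting of chain compositions
  have split : ∀ i j : ℕ, ∃ w : ℕ → ℕ, (i ≤ j → ∀ n, c j n = c i (w n)) ∧ ∀ n, n ≤ w n := by
    intro i j
    induction j with
    | zero =>
      refine ⟨id, fun hij n => ?_, fun n => le_rfl⟩
      have : i = 0 := Nat.le_zero.mp hij
      subst this; rfl
    | succ j ih =>
      obtain ⟨w, hw1, hw2⟩ := ih
      by_cases hij : i = j + 1
      · subst hij; exact ⟨id, fun _ n => rfl, fun n => le_rfl⟩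
      · refine ⟨w ∘ K j (c j), fun hij' n => ?_, fun n =>
          le_trans (hKmono j (c j)).le_apply (hw2 _)⟩
        rw [hstep j n, hw1 (by omega) _]; rfl
  choose w hw1 hw2 using split
  -- the diagonal sequence
  set d : ℕ → ℕ := fun n => c (n + 1) n with hd_def
  have hdmono : StrictMono d := by
    intro a b hab
    calc d a = c (a + 1) a := rfl
      _ < c (a + 1) b := (cmono (a + 1)) hab
      _ ≤ c (b + 1) b := by
        have h1 : c (b + 1) b = c (a + 1) (w (a + 1) (b + 1) b) := hw1 _ _ (by omega) b
        rw [h1]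
        exact (cmono (a + 1)).monotone (hw2 _ _ b)
  have hdiag : ∀ j n, j ≤ n → d n = c (j + 1) (w (j + 1) (n + 1) n) ∧ n ≤ w (j + 1) (n + 1) n :=
    fun j n hjn => ⟨hw1 _ _ (by omega) n, hw2 _ _ n⟩
  -- limit functions at each stage along the diagonal
  have hA : ∀ j t, Tendsto (fun n => G j (t + s' (d n))) atTop (𝓝 (H j (c j) t)) := by
    intro j t
    have base : Tendsto (fun m => G j (t + s' (c (j + 1) m))) atTop (𝓝 (H j (c j) t)) := hH1 j (c j) t
    have comp := base.comp (tendsto_atTop_mono (fun n => (hw2 (j+1) (n+1) n)) tendsto_id)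
    apply comp.congr'
    filter_upwards [eventually_ge_atTop j] with n hn
    simp only [Function.comp_apply, id_eq]
    rw [← (hdiag j n hn).1]
  have hB : ∀ j t, Tendsto (fun n => H j (c j) (t - s' (d n))) atTop (𝓝 (G j t)) := by
    intro j t
    have base : Tendsto (fun m => H j (c j) (t - s' (c (j + 1) m))) atTop (𝓝 (G j t)) := hH2 j (c j) t
    have comp := base.comp (tendsto_atTop_mono (fun n => (hw2 (j+1) (n+1) n)) tendsto_id)
    apply comp.congr'
    filter_upwards [eventually_ge_atTop j] with n hn
    simp only [Function.comp_apply, id_eq]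
    rw [← (hdiag j n hn).1]
  -- uniform Cauchy property of the G's, inherited by the H's
  have hGcau : ∀ ε : ℝ, 0 < ε → ∃ N, ∀ i ≥ N, ∀ j ≥ N, ∀ x, dist (G i x) (G j x) ≤ ε := by
    intro ε hε
    obtain ⟨N, hN⟩ := eventually_atTop.mp (Metric.tendstoUniformly_iff.mp h (ε/2) (by linarith))
    refine ⟨N, fun i hi j hj x => ?_⟩
    have h1 := hN i hi x
    have h2 := hN j hj x
    calc dist (G i x) (G j x) ≤ dist (G i x) (g x) + dist (g x) (G j x) := dist_triangle _ _ _
      _ ≤ ε := by rw [dist_comm (G i x)] ; linarith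
  have hHcau : ∀ ε : ℝ, 0 < ε → ∃ N, ∀ i ≥ N, ∀ j ≥ N, ∀ t,
      dist (H i (c i) t) (H j (c j) t) ≤ ε := by
    intro ε hε
    obtain ⟨N, hN⟩ := hGcau ε hε
    refine ⟨N, fun i hi j hj t => ?_⟩
    have hd : Tendsto (fun n => dist (G i (t + s' (d n))) (G j (t + s' (d n)))) atTop
        (𝓝 (dist (H i (c i) t) (H j (c j) t))) := (hA i t).dist (hA j t)
    exact le_of_tendsto hd (Eventually.of_forall fun n => hN i hi j hj _)
  -- pointwise limit h of the H's
  have hex : ∀ t : ℝ, ∃ x : X, Tendsto (fun j => H j (c j) t) atTop (𝓝 x) := by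
    intro t
    apply cauchySeq_tendsto_of_complete
    rw [Metric.cauchySeq_iff]
    intro ε hε
    obtain ⟨N, hN⟩ := hHcau (ε/2) (by linarith)
    exact ⟨N, fun i hi j hj => lt_of_le_of_lt (hN i hi j hj t) (by linarith)⟩
  choose hlim hhlim using hex
  -- uniform approximation of hlim by the H's
  have hhu : ∀ ε : ℝ, 0 < ε → ∃ N, ∀ j ≥ N, ∀ t, dist (H j (c j) t) (hlim t) ≤ ε := by
    intro ε hε
    obtain ⟨N, hN⟩ := hHcau ε hε
    refine ⟨N, fun j hj t => ?_⟩
    have hd : Tendsto (fun i => dist (H j (c j) t) (H i (c i) t)) atTop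
        (𝓝 (dist (H j (c j) t) (hlim t))) := tendsto_const_nhds.dist (hhlim t)
    apply le_of_tendsto hd
    filter_upwards [eventually_ge_atTop N] with i hi
    exact hN j hj i hi t
  refine ⟨d, hlim, hdmono, fun t => ?_, fun t => ?_⟩
  · rw [Metric.tendsto_atTop]
    intro ε hε
    obtain ⟨N₁, hN₁⟩ := eventually_atTop.mp (Metric.tendstoUniformly_iff.mp h (ε/3) (by linarith))
    obtain ⟨N₂, hN₂⟩ := hhu (ε/4) (by linarith)
    set j := max N₁ N₂
    obtain ⟨N₃, hN₃⟩ := eventually_atTop.mp ((hA j t).eventually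
      (Metric.ball_mem_nhds _ (show (0:ℝ) < ε/4 by linarith)))
    refine ⟨N₃, fun n hn => ?_⟩
    have h1 := hN₁ j (le_max_left _ _) (t + s' (d n))
    have h2 : dist (G j (t + s' (d n))) (H j (c j) t) < ε/4 := by
      have := hN₃ n hn
      simpa [Metric.mem_ball, dist_comm] using this
    have h3 := hN₂ j (le_max_right _ _) t
    calc dist (g (t + s' (d n))) (hlim t)
        ≤ dist (g (t + s' (d n))) (G j (t + s' (d n))) + dist (G j (t + s' (d n))) (H j (c j) t)
          + dist (H j (c j) t) (hlim t) := dist_triangle4 _ _ _ _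
      _ < ε := by linarith
  · rw [Metric.tendsto_atTop]
    intro ε hε
    obtain ⟨N₁, hN₁⟩ := eventually_atTop.mp (Metric.tendstoUniformly_iff.mp h (ε/4) (by linarith))
    obtain ⟨N₂, hN₂⟩ := hhu (ε/4) (by linarith)
    set j := max N₁ N₂
    obtain ⟨N₃, hN₃⟩ := eventually_atTop.mp ((hB j t).eventually
      (Metric.ball_mem_nhds _ (show (0:ℝ) < ε/4 by linarith)))
    refine ⟨N₃, fun n hn => ?_⟩
    have h1 : dist (hlim (t - s' (d n))) (H j (c j) (t - s' (d n))) ≤ ε/4 := by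
      rw [dist_comm]; exact hN₂ j (le_max_right _ _) _
    have h2 : dist (H j (c j) (t - s' (d n))) (G j t) < ε/4 := by
      have := hN₃ n hn
      simpa [Metric.mem_ball, dist_comm] using this
    have h3 : dist (G j t) (g t) < ε/4 := by
      rw [dist_comm]; exact hN₁ j (le_max_left _ _) t
    calc dist (hlim (t - s' (d n))) (g t)
        ≤ dist (hlim (t - s' (d n))) (H j (c j) (t - s' (d n)))
          + dist (H j (c j) (t - s' (d n))) (G j t) + dist (G j t) (g t) := dist_triangle4 _ _ _ _
      _ < ε := by linarith
end AAClosed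


section Main
variable {X : Type*} [NormedAddCommGroup X]

lemma key_estimate {f₁ f₂ g₁ g₂ φ₁ φ₂ : ℝ → X} (hg₁ : AlmostAutomorphic g₁)
    (hg₂ : AlmostAutomorphic g₂) (hφ₁ : PAPZero φ₁) (hφ₂ : PAPZero φ₂)
    (hs₁ : ∀ t, f₁ t = g₁ t + φ₁ t) (hs₂ : ∀ t, f₂ t = g₂ t + φ₂ t)
    {C : ℝ} (hC : ∀ t, ‖f₁ t - f₂ t‖ ≤ C) : ∀ t, ‖g₁ t - g₂ t‖ ≤ C := by
  apply aa_part_norm_le (f := fun t => f₁ t - f₂ t) (φ := fun t => φ₁ t - φ₂ t)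
    (aa_sub hg₁ hg₂) (papzero_sub hφ₁ hφ₂)
    (fun t => by show f₁ t - f₂ t = (g₁ t - g₂ t) + (φ₁ t - φ₂ t); rw [hs₁ t, hs₂ t]; abel) hC

end Main

/-- `PAA(X)` is a closed linear subspace of `BC(ℝ, X)`; consequently `PAA(X)` with the
sup norm is a Banach space. -/
theorem pseudoAlmostAutomorphic_closed_subspace {X : Type*} [NormedAddCommGroup X]
    [NormedSpace ℂ X] [CompleteSpace X] :
    IsClosed {f : BoundedContinuousFunction ℝ X | PseudoAlmostAutomorphic ⇑f} ∧
      PseudoAlmostAutomorphic ⇑(0 : BoundedContinuousFunction ℝ X) ∧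
      (∀ f g : BoundedContinuousFunction ℝ X, PseudoAlmostAutomorphic ⇑f →
        PseudoAlmostAutomorphic ⇑g → PseudoAlmostAutomorphic ⇑(f + g)) ∧
      (∀ (c : ℂ) (f : BoundedContinuousFunction ℝ X), PseudoAlmostAutomorphic ⇑f →
        PseudoAlmostAutomorphic ⇑(c • f)) := by
  refine ⟨?_, ?_, ?_, ?_⟩
  · -- closedness
    apply IsSeqClosed.isClosed
    intro F f hF hTend
    choose g φ hgAA hφP hsum using hF
    choose Cg hCg using fun n => aa_bounded (hgAA n)
    set Gb : ℕ → BoundedContinuousFunction ℝ X := fun n =>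
      BoundedContinuousFunction.ofNormedAddCommGroup (g n) (hgAA n).1 (Cg n) (hCg n) with hGb_def
    have hGb_coe : ∀ n, ⇑(Gb n) = g n := fun n => rfl
    have hkey : ∀ n m : ℕ, ∀ t, ‖g n t - g m t‖ ≤ dist (F n) (F m) := by
      intro n m
      apply key_estimate (hgAA n) (hgAA m) (hφP n) (hφP m) (hsum n) (hsum m)
      intro t
      rw [← dist_eq_norm]
      exact BoundedContinuousFunction.dist_coe_le_dist t
    have hcau : CauchySeq Gb := by
      rw [Metric.cauchySeq_iff]
      intro ε hε
      obtain ⟨N, hN⟩ := Metric.cauchySeq_iff.mp hTend.cauchySeq (ε/2) (by linarith)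
      refine ⟨N, fun n hn m hm => ?_⟩
      have hle : dist (Gb n) (Gb m) ≤ ε/2 := by
        apply (BoundedContinuousFunction.dist_le (by linarith)).mpr
        intro t
        rw [dist_eq_norm]
        exact (hkey n m t).trans (hN n hn m hm).le
      linarith
    obtain ⟨Glim, hGlim⟩ := cauchySeq_tendsto_of_complete hcau
    have hgu : TendstoUniformly (fun n => g n) ⇑Glim atTop := by
      have := BoundedContinuousFunction.tendsto_iff_tendstoUniformly.mp hGlim
      simpa [hGb_coe] using this
    have hGlimAA : AlmostAutomorphic ⇑Glim := aa_of_tendstoUniformly (fun n => hgAA n) hgu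
    have hfu : TendstoUniformly (fun n => ⇑(F n)) ⇑f atTop :=
      BoundedContinuousFunction.tendsto_iff_tendstoUniformly.mp hTend
    have hφu : TendstoUniformly (fun n t => F n t - g n t) (fun t => f t - Glim t) atTop :=
      hfu.sub hgu
    have hφlim : PAPZero (fun t => f t - Glim t) := by
      apply papzero_of_tendstoUniformly (F := fun n t => F n t - g n t) _ hφu
      intro n
      show PAPZero (fun t => F n t - g n t)
      have heq : (fun t => F n t - g n t) = φ n := funext fun t => by rw [hsum n t]; abel
      rw [heq]
      exact hφP n
    exact ⟨⇑Glim, fun t => f t - Glim t, hGlimAA, hφlim, fun t => by show f t = Glim t + (f t - Glim t); abel⟩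
  · -- zero
    exact ⟨(fun _ => 0), (fun _ => 0), aa_zero, papzero_zero, fun t => by simp⟩
  · -- addition
    rintro f₁ f₂ ⟨g₁, φ₁, hg₁, hφ₁, hs₁⟩ ⟨g₂, φ₂, hg₂, hφ₂, hs₂⟩
    refine ⟨fun t => g₁ t + g₂ t, fun t => φ₁ t + φ₂ t, aa_add hg₁ hg₂,
      papzero_add hφ₁ hφ₂, fun t => ?_⟩
    simp only [BoundedContinuousFunction.coe_add, Pi.add_apply]
    rw [hs₁ t, hs₂ t]
    abel
  · -- scalar multiplication
    rintro c f ⟨g, φ, hg, hφ, hs⟩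
    refine ⟨fun t => c • g t, fun t => c • φ t, aa_smul c hg, papzero_smul c hφ, fun t => ?_⟩
    simp only [BoundedContinuousFunction.coe_smul, Pi.smul_apply]
    rw [hs t, smul_add]
end

section
/- Let (T(t))_{t≥0} be a strongly continuous semigroup of bounded linear operators on a Banach space X (T(0) = I, T(t+s) = T(t)T(s), and t ↦ T(t)x continuous for each x ∈ X) satisfying ‖T(t)‖ ≤ N e^{−δ t} for all t ≥ 0, for some constants N, δ > 0. If g : ℝ → X is a bounded continuous function, then φ(t) := ∫_{−∞}^{t} T(t−s) g(s) ds (a Bochner integral) is the unique bounded continuous function φ : ℝ → X satisfying φ(t) = T(t−s) φ(s) + ∫_{s}^{t} T(t−τ) g(τ) dτ for all pairs (t, s) with t ≥ s. -/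
open Filter Topology MeasureTheory

/-- Let `(T(t))_{t ≥ 0}` be a strongly continuous semigroup on a Banach space `X`
with `‖T(t)‖ ≤ N e^{-δ t}`.  For a bounded continuous `g`, the function
`φ(t) = ∫_{-∞}^t T(t-s) g(s) ds` is the unique bounded continuous mild solution,
i.e. the unique bounded continuous `ψ` with
`ψ(t) = T(t-s) ψ(s) + ∫_s^t T(t-τ) g(τ) dτ` for all `t ≥ s`. -/
theorem mild_solution_exists_unique {X : Type*} [NormedAddCommGroup X]
    [NormedSpace ℂ X] [CompleteSpace X]
    (T : ℝ → X →L[ℂ] X) (N δ : ℝ) (hN : 0 < N) (hδ : 0 < δ)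
    (hT0 : T 0 = ContinuousLinearMap.id ℂ X)
    (hTsemi : ∀ t ≥ (0 : ℝ), ∀ s ≥ (0 : ℝ), T (t + s) = (T t).comp (T s))
    (hTcont : ∀ x : X, ContinuousOn (fun t => T t x) (Set.Ici (0 : ℝ)))
    (hTnorm : ∀ t ≥ (0 : ℝ), ‖T t‖ ≤ N * Real.exp (-δ * t))
    (g : ℝ → X) (hg : Continuous g) (hgb : ∃ C : ℝ, ∀ t : ℝ, ‖g t‖ ≤ C) :
    (Continuous (fun t => ∫ s in Set.Iic t, T (t - s) (g s)) ∧
      (∃ C : ℝ, ∀ t : ℝ, ‖∫ s in Set.Iic t, T (t - s) (g s)‖ ≤ C) ∧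
      (∀ s t : ℝ, s ≤ t →
        (∫ σ in Set.Iic t, T (t - σ) (g σ)) =
          T (t - s) (∫ σ in Set.Iic s, T (s - σ) (g σ)) +
            ∫ σ in s..t, T (t - σ) (g σ))) ∧
    (∀ ψ : ℝ → X, Continuous ψ → (∃ C : ℝ, ∀ t : ℝ, ‖ψ t‖ ≤ C) →
      (∀ s t : ℝ, s ≤ t → ψ t = T (t - s) (ψ s) + ∫ σ in s..t, T (t - σ) (g σ)) →
      ∀ t : ℝ, ψ t = ∫ σ in Set.Iic t, T (t - σ) (g σ)) := by
  obtain ⟨C, hC⟩ := hgb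
  have hC0 : 0 ≤ C := le_trans (norm_nonneg _) (hC 0)
  -- pointwise norm bound for T
  have hTbx : ∀ t ≥ (0:ℝ), ∀ x : X, ‖T t x‖ ≤ N * Real.exp (-δ * t) * ‖x‖ := by
    intro t ht x
    exact le_trans ((T t).le_opNorm x)
      (mul_le_mul_of_nonneg_right (hTnorm t ht) (norm_nonneg x))
  have hexple : ∀ t ≥ (0:ℝ), Real.exp (-δ * t) ≤ 1 := by
    intro t ht
    rw [Real.exp_le_one_iff]
    have : 0 ≤ δ * t := mul_nonneg hδ.le ht
    linarith
  -- joint continuity of (t, x) ↦ T t x on Ici 0 × univ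
  have hjoint : ContinuousOn (fun p : ℝ × X => T p.1 p.2)
      (Set.Ici (0:ℝ) ×ˢ (Set.univ : Set X)) := by
    rintro ⟨t₀, x₀⟩ ⟨ht₀, -⟩
    have h1 : Tendsto (fun p : ℝ × X => T p.1 x₀)
        (nhdsWithin (t₀, x₀) (Set.Ici (0:ℝ) ×ˢ (Set.univ : Set X))) (nhds (T t₀ x₀)) := by
      have := (hTcont x₀ t₀ ht₀)
      refine this.tendsto.comp ?_
      refine tendsto_nhdsWithin_of_tendsto_nhds_of_eventually_within _
        (continuous_fst.tendsto _ |>.mono_left nhdsWithin_le_nhds) ?_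
      filter_upwards [self_mem_nhdsWithin] with p hp
      exact hp.1
    have h2 : Tendsto (fun p : ℝ × X => T p.1 (p.2 - x₀))
        (nhdsWithin (t₀, x₀) (Set.Ici (0:ℝ) ×ˢ (Set.univ : Set X))) (nhds 0) := by
      have hb : ∀ᶠ p : ℝ × X in
          nhdsWithin (t₀, x₀) (Set.Ici (0:ℝ) ×ˢ (Set.univ : Set X)),
          ‖T p.1 (p.2 - x₀)‖ ≤ N * ‖p.2 - x₀‖ := by
        filter_upwards [self_mem_nhdsWithin] with p hp
        calc ‖T p.1 (p.2 - x₀)‖ ≤ N * Real.exp (-δ * p.1) * ‖p.2 - x₀‖ :=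
              hTbx p.1 hp.1 _
          _ ≤ N * 1 * ‖p.2 - x₀‖ := by
              gcongr
              exact hexple p.1 hp.1
          _ = N * ‖p.2 - x₀‖ := by ring_nf
      have hlim : Tendsto (fun p : ℝ × X => N * ‖p.2 - x₀‖)
          (nhdsWithin (t₀, x₀) (Set.Ici (0:ℝ) ×ˢ (Set.univ : Set X))) (nhds 0) := by
        have : Continuous fun p : ℝ × X => N * ‖p.2 - x₀‖ :=
          continuous_const.mul ((continuous_snd.sub continuous_const).norm)
        have h10 : Tendsto (fun p : ℝ × X => N * ‖p.2 - x₀‖)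
            (nhdsWithin (t₀, x₀) (Set.Ici (0:ℝ) ×ˢ (Set.univ : Set X)))
            (nhds (N * ‖x₀ - x₀‖)) :=
          (this.tendsto (t₀, x₀)).mono_left nhdsWithin_le_nhds
        simpa using h10
      exact squeeze_zero_norm' hb hlim
    have : Tendsto (fun p : ℝ × X => T p.1 (p.2 - x₀) + T p.1 x₀)
        (nhdsWithin (t₀, x₀) (Set.Ici (0:ℝ) ×ˢ (Set.univ : Set X))) (nhds (0 + T t₀ x₀)) :=
      h2.add h1
    rw [zero_add] at this
    refine this.congr' ?_ |>.mono_left le_rfl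
    filter_upwards with p
    simp [map_sub]
  -- continuity of the integrand on Iic t
  have hmeasIic : ∀ t : ℝ, ContinuousOn (fun σ => T (t - σ) (g σ)) (Set.Iic t) := by
    intro t
    have hmap : Set.MapsTo (fun σ : ℝ => (t - σ, g σ)) (Set.Iic t)
        (Set.Ici (0:ℝ) ×ˢ (Set.univ : Set X)) := by
      intro σ hσ
      have hσ' : σ ≤ t := hσ
      exact ⟨by simp only [Set.mem_Ici]; linarith, trivial⟩
    exact hjoint.comp ((continuous_const.sub continuous_id).prodMk hg).continuousOn hmap
  have hmeasIci : ∀ t : ℝ, ContinuousOn (fun u => T u (g (t - u))) (Set.Ici (0:ℝ)) := by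
    intro t
    have hmap : Set.MapsTo (fun u : ℝ => (u, g (t - u))) (Set.Ici (0:ℝ))
        (Set.Ici (0:ℝ) ×ˢ (Set.univ : Set X)) := fun u hu => ⟨hu, trivial⟩
    exact hjoint.comp (continuous_id.prodMk (hg.comp (continuous_const.sub continuous_id))).continuousOn hmap
  -- integrable bound on Ici 0
  have hbound : IntegrableOn (fun u => N * C * Real.exp (-δ * u)) (Set.Ici (0:ℝ)) := by
    have := (exp_neg_integrableOn_Ioi 0 hδ)
    rw [integrableOn_Ici_iff_integrableOn_Ioi]
    exact this.const_mul (N * C)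
  have hbnd : ∀ t : ℝ, ∀ u ∈ Set.Ici (0:ℝ), ‖T u (g (t - u))‖ ≤ N * C * Real.exp (-δ * u) := by
    intro t u hu
    calc ‖T u (g (t - u))‖ ≤ N * Real.exp (-δ * u) * ‖g (t - u)‖ := hTbx u hu _
      _ ≤ N * Real.exp (-δ * u) * C :=
          mul_le_mul_of_nonneg_left (hC _) (mul_nonneg hN.le (Real.exp_pos _).le)
      _ = N * C * Real.exp (-δ * u) := by ring
  have hIntIci : ∀ t : ℝ, IntegrableOn (fun u => T u (g (t - u))) (Set.Ici (0:ℝ)) := by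
    intro t
    refine Integrable.mono' hbound
      ((hmeasIci t).aestronglyMeasurable measurableSet_Ici) ?_
    rw [ae_restrict_iff' measurableSet_Ici]
    exact ae_of_all _ (hbnd t)
  -- measure preserving change of variables
  have h1 : ∀ t : ℝ, MeasurePreserving (fun u : ℝ => t - u) volume volume :=
    fun t => Measure.measurePreserving_sub_left volume t
  have h2 : ∀ t : ℝ, MeasurableEmbedding (fun u : ℝ => t - u) :=
    fun t => (MeasurableEquiv.subLeft t).measurableEmbedding
  have hpre : ∀ t : ℝ, (fun u : ℝ => t - u) ⁻¹' (Set.Iic t) = Set.Ici (0:ℝ) := by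
    intro t; ext u; simp
  have hchg : ∀ (f : ℝ → X) (t : ℝ),
      ∫ s in Set.Iic t, f s = ∫ u in Set.Ici (0:ℝ), f (t - u) := by
    intro f t
    have h3 := (h1 t).setIntegral_preimage_emb (h2 t) f (Set.Iic t)
    rw [← h3, hpre]
  have hchgval : ∀ t : ℝ,
      (∫ σ in Set.Iic t, T (t - σ) (g σ)) = ∫ u in Set.Ici (0:ℝ), T u (g (t - u)) := by
    intro t
    rw [hchg (fun σ => T (t - σ) (g σ)) t]
    congr 1
    ext u
    rw [sub_sub_cancel]
  -- integrability on Iic t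
  have hIntIic' : ∀ t : ℝ, IntegrableOn (fun σ => T (t - σ) (g σ)) (Set.Iic t) := by
    intro t
    have hres : MeasurePreserving (fun u : ℝ => t - u)
        (volume.restrict (Set.Ici (0:ℝ))) (volume.restrict (Set.Iic t)) := by
      have := (h1 t).restrict_preimage_emb (h2 t) (Set.Iic t)
      rwa [hpre] at this
    have h4 : ((fun σ => T (t - σ) (g σ)) ∘ fun u : ℝ => t - u)
        = fun u => T u (g (t - u)) := by
      funext u
      simp [Function.comp, sub_sub_cancel]
    have h5 := (hres.integrable_comp_emb (h2 t) (g := fun σ => T (t - σ) (g σ))).1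
    rw [h4] at h5
    exact h5 (hIntIci t)
  -- boundedness
  have hφb : ∀ t : ℝ, ‖∫ σ in Set.Iic t, T (t - σ) (g σ)‖
      ≤ ∫ u in Set.Ici (0:ℝ), N * C * Real.exp (-δ * u) := by
    intro t
    rw [hchgval t]
    refine norm_integral_le_of_norm_le hbound ?_
    rw [ae_restrict_iff' measurableSet_Ici]
    exact ae_of_all _ (hbnd t)
  -- continuity
  have hφcont : Continuous (fun t => ∫ s in Set.Iic t, T (t - s) (g s)) := by
    have : (fun t => ∫ s in Set.Iic t, T (t - s) (g s))
        = fun t => ∫ u in Set.Ici (0:ℝ), T u (g (t - u)) := funext hchgval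
    rw [this]
    refine continuous_of_dominated
      (fun t => (hmeasIci t).aestronglyMeasurable measurableSet_Ici)
      (fun t => (ae_restrict_iff' measurableSet_Ici).2 (ae_of_all _ (hbnd t)))
      hbound ?_
    exact ae_of_all _ (fun u =>
      ((T u).continuous.comp (hg.comp (continuous_id.sub continuous_const))))
  -- mild solution identity
  have hmild : ∀ s t : ℝ, s ≤ t →
      (∫ σ in Set.Iic t, T (t - σ) (g σ)) =
        T (t - s) (∫ σ in Set.Iic s, T (s - σ) (g σ)) + ∫ σ in s..t, T (t - σ) (g σ) := by
    intro s t hst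
    have hsplit : (∫ σ in Set.Iic t, T (t - σ) (g σ))
        = (∫ σ in Set.Iic s, T (t - σ) (g σ)) + ∫ σ in Set.Ioc s t, T (t - σ) (g σ) := by
      rw [← setIntegral_union (Set.Iic_disjoint_Ioc le_rfl) measurableSet_Ioc
        ((hIntIic' t).mono_set (Set.Iic_subset_Iic.2 hst))
        ((hIntIic' t).mono_set Set.Ioc_subset_Iic_self),
        Set.Iic_union_Ioc_eq_Iic hst]
    rw [hsplit, intervalIntegral.integral_of_le hst]
    congr 1
    have hcongr : (∫ σ in Set.Iic s, T (t - σ) (g σ))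
        = ∫ σ in Set.Iic s, T (t - s) (T (s - σ) (g σ)) := by
      refine setIntegral_congr_fun measurableSet_Iic ?_
      intro σ hσ
      have hσ' : σ ≤ s := hσ
      show T (t - σ) (g σ) = T (t - s) (T (s - σ) (g σ))
      have h6 : t - σ = (t - s) + (s - σ) := by ring
      rw [h6, hTsemi (t - s) (by linarith) (s - σ) (by linarith)]
      rfl
    rw [hcongr]
    exact ((T (t - s)).integral_comp_comm (hIntIic' s))
  refine ⟨⟨hφcont, ⟨_, hφb⟩, hmild⟩, ?_⟩
  -- uniqueness
  intro ψ hψc ⟨Cψ, hψb⟩ hψeq t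
  set φ : ℝ → X := fun t => ∫ σ in Set.Iic t, T (t - σ) (g σ) with hφdef
  set C' : ℝ := ∫ u in Set.Ici (0:ℝ), N * C * Real.exp (-δ * u) with hC'def
  have key : ∀ R ≥ (0:ℝ), ‖ψ t - φ t‖ ≤ N * Real.exp (-δ * R) * (Cψ + C') := by
    intro R hR
    have hs : t - R ≤ t := by linarith
    have e1 := hψeq (t - R) t hs
    have e2 := hmild (t - R) t hs
    have h7 : t - (t - R) = R := by ring
    rw [h7] at e1 e2
    have : ψ t - φ t = T R (ψ (t - R) - φ (t - R)) := by
      rw [map_sub]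
      rw [hφdef]
      simp only
      rw [e1, e2]
      abel
    rw [this]
    calc ‖T R (ψ (t - R) - φ (t - R))‖
        ≤ N * Real.exp (-δ * R) * ‖ψ (t - R) - φ (t - R)‖ := hTbx R hR _
      _ ≤ N * Real.exp (-δ * R) * (Cψ + C') :=
          mul_le_mul_of_nonneg_left
            ((norm_sub_le _ _).trans (add_le_add (hψb _) (hφb _)))
            (mul_nonneg hN.le (Real.exp_pos _).le)
  have hlim : Tendsto (fun R : ℝ => N * Real.exp (-δ * R) * (Cψ + C')) atTop (nhds 0) := by
    have h8 : Tendsto (fun R : ℝ => Real.exp (-δ * R)) atTop (nhds 0) := by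
      have hmul : Tendsto (fun R : ℝ => δ * R) atTop atTop :=
        Tendsto.const_mul_atTop hδ tendsto_id
      have h9 : Tendsto (fun R : ℝ => Real.exp (-(δ * R))) atTop (nhds 0) :=
        Real.tendsto_exp_neg_atTop_nhds_zero.comp hmul
      simpa [neg_mul] using h9
    have := (h8.const_mul N).mul_const (Cψ + C')
    simpa using this
  have : ‖ψ t - φ t‖ ≤ 0 := by
    refine ge_of_tendsto hlim ?_
    filter_upwards [eventually_ge_atTop (0:ℝ)] with R hR
    exact key R hR
  have := le_antisymm this (norm_nonneg _)
  rw [norm_eq_zero, sub_eq_zero] at this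
  exact this
end

section
/- Let h : ℝ → X be a bounded continuous function and define φ(t) := ∫_{−∞}^{t} T(t−s) h(s) ds. Then φ is a bounded continuous function from ℝ into Y, with ‖φ(t)‖_Y ≤ d(β) · sup_s ‖h(s)‖ for all t ∈ ℝ, and φ is a mild solution: φ(t) = T(t−s) φ(s) + ∫_{s}^{t} T(t−σ) h(σ) dσ for all t ≥ s. -/
open Filter Topology MeasureTheory

/-- Let `Y ↪ X` (via `j`), `(T(t))_{t≥0}` a strongly continuous semigroup on `X`
mapping into `Y` for `t > 0` (realized by `TY`), with
`‖T(τ)x‖_Y ≤ M τ^{-β} e^{-(δ/2)τ} ‖x‖_X` for `τ > 0`.  For a bounded continuous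
`h : ℝ → X`, the function `φ(t) = ∫_{-∞}^t T(t-s) h(s) ds` is bounded continuous
into `Y` with `‖φ(t)‖_Y ≤ d(β) sup_s ‖h(s)‖`, where
`d(β) = M (2/δ)^{1-β} Γ(1-β)`, and `φ` is a mild solution:
`φ(t) = T(t-s) φ(s) + ∫_s^t T(t-σ) h(σ) dσ` for all `t ≥ s`. -/
theorem convolution_mild_solution_bounded {X Y : Type*}
    [NormedAddCommGroup X] [NormedSpace ℂ X] [CompleteSpace X]
    [NormedAddCommGroup Y] [NormedSpace ℂ Y] [CompleteSpace Y]
    (j : Y →L[ℂ] X) (hj : Function.Injective j)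
    (β M δ : ℝ) (hβ : β ∈ Set.Ioo (0 : ℝ) 1) (hM : 0 < M) (hδ : 0 < δ)
    (T : ℝ → X →L[ℂ] X)
    (hT0 : T 0 = ContinuousLinearMap.id ℂ X)
    (hTsemi : ∀ t ≥ (0 : ℝ), ∀ s ≥ (0 : ℝ), T (t + s) = (T t).comp (T s))
    (hTcont : ∀ x : X, ContinuousOn (fun t => T t x) (Set.Ici (0 : ℝ)))
    (TY : ℝ → X →L[ℂ] Y)
    (hjTY : ∀ t > (0 : ℝ), ∀ x : X, j (TY t x) = T t x)
    (hTYcont : ∀ x : X, ContinuousOn (fun τ => TY τ x) (Set.Ioi (0 : ℝ)))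
    (hTYnorm : ∀ τ > (0 : ℝ), ∀ x : X,
      ‖TY τ x‖ ≤ M * τ ^ (-β) * Real.exp (-(δ / 2) * τ) * ‖x‖)
    (h : ℝ → X) (hh : Continuous h) (hhb : ∃ C : ℝ, ∀ t : ℝ, ‖h t‖ ≤ C) :
    Continuous (fun t => ∫ s in Set.Iic t, TY (t - s) (h s)) ∧
      (∀ t : ℝ, ‖∫ s in Set.Iic t, TY (t - s) (h s)‖ ≤
        (M * (2 / δ) ^ (1 - β) * Real.Gamma (1 - β)) * ⨆ s : ℝ, ‖h s‖) ∧
      (∀ s t : ℝ, s ≤ t →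
        j (∫ σ in Set.Iic t, TY (t - σ) (h σ)) =
          T (t - s) (j (∫ σ in Set.Iic s, TY (s - σ) (h σ))) +
            ∫ σ in s..t, T (t - σ) (h σ)) := by
  obtain ⟨hβ0, hβ1⟩ := hβ
  obtain ⟨C₀, hC₀⟩ := hhb
  have hb : (0:ℝ) < δ / 2 := by positivity
  set C : ℝ := max C₀ 0 with hC_def
  have hC0 : (0:ℝ) ≤ C := le_max_right _ _
  have hC : ∀ t, ‖h t‖ ≤ C := fun t => (hC₀ t).trans (le_max_left _ _)
  -- the Gamma-type bound function
  have hg_int : IntegrableOn (fun τ : ℝ => τ ^ (-β) * Real.exp (-(δ / 2 * τ)))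
      (Set.Ioi 0) := by
    have := integrableOn_rpow_mul_exp_neg_mul_rpow (p := 1) (s := -β) (b := δ / 2)
      (by linarith) zero_lt_one hb
    simpa [Real.rpow_one, neg_mul] using this
  have hg_val : ∫ τ in Set.Ioi (0:ℝ), τ ^ (-β) * Real.exp (-(δ / 2 * τ))
      = (2 / δ) ^ (1 - β) * Real.Gamma (1 - β) := by
    have h1 : (0:ℝ) < 1 - β := by linarith
    have := Real.integral_rpow_mul_exp_neg_mul_Ioi h1 hb
    rw [show (1 - β - 1 : ℝ) = -β by ring] at this
    rw [this, one_div_div]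
  -- joint continuity of (σ, x) ↦ TY (e σ) (g σ)
  have TYjoint : ∀ (g : ℝ → X), Continuous g → ∀ (e : ℝ → ℝ), Continuous e →
      ContinuousOn (fun σ => TY (e σ) (g σ)) {σ | 0 < e σ} := by
    intro g hg e he σ0 hσ0
    have hτ0 : (0:ℝ) < e σ0 := hσ0
    have hB : ContinuousWithinAt (fun σ => TY (e σ) (g σ0)) {σ | 0 < e σ} σ0 :=
      ((hTYcont (g σ0)) (e σ0) hτ0).comp he.continuousWithinAt (fun σ hσ => hσ)
    have hA : Tendsto (fun σ => TY (e σ) (g σ - g σ0)) (𝓝[{σ | 0 < e σ}] σ0) (𝓝 0) := by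
      apply squeeze_zero_norm'
      · filter_upwards [self_mem_nhdsWithin] with σ hσ
        exact hTYnorm (e σ) hσ (g σ - g σ0)
      · have hcont : ContinuousWithinAt
            (fun σ => M * (e σ) ^ (-β) * Real.exp (-(δ / 2) * e σ) * ‖g σ - g σ0‖)
            {σ | 0 < e σ} σ0 := by
          apply ContinuousAt.continuousWithinAt
          have h1 : ContinuousAt (fun σ => (e σ) ^ (-β)) σ0 :=
            (Real.continuousAt_rpow_const (e σ0) (-β) (Or.inl hτ0.ne')).comp he.continuousAt
          have h2 : ContinuousAt (fun σ => Real.exp (-(δ / 2) * e σ)) σ0 :=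
            (Real.continuous_exp.comp (continuous_const.mul he)).continuousAt
          exact ((continuousAt_const.mul h1).mul h2).mul
            ((hg.sub continuous_const).norm.continuousAt)
        have h0 : M * (e σ0) ^ (-β) * Real.exp (-(δ / 2) * e σ0) * ‖g σ0 - g σ0‖ = 0 := by simp
        exact h0 ▸ hcont
    have heq : ∀ σ, TY (e σ) (g σ - g σ0) + TY (e σ) (g σ0) = TY (e σ) (g σ) := by
      intro σ; rw [← map_add]; congr 1; abel
    have key : Tendsto (fun σ => TY (e σ) (g σ - g σ0) + TY (e σ) (g σ0))
        (𝓝[{σ | 0 < e σ}] σ0) (𝓝 (TY (e σ0) (g σ0))) := by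
      simpa using hA.add hB
    exact key.congr heq
  -- change of variables s = t - τ
  have memb : ∀ t : ℝ, MeasurableEmbedding (fun τ : ℝ => t - τ) :=
    fun t => (Homeomorph.subLeft t).measurableEmbedding
  have mp : ∀ t : ℝ, MeasurePreserving (fun τ : ℝ => t - τ) volume volume :=
    fun t => Measure.measurePreserving_sub_left volume t
  have himg : ∀ t : ℝ, (fun τ : ℝ => t - τ) '' Set.Ioi 0 = Set.Iio t := by
    intro t; rw [Set.image_const_sub_Ioi]; simp
  have subst : ∀ (t : ℝ) (f : ℝ → Y),
      ∫ s in Set.Iic t, f s = ∫ τ in Set.Ioi (0:ℝ), f (t - τ) := by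
    intro t f
    rw [integral_Iic_eq_integral_Iio, ← himg t,
      (mp t).setIntegral_image_emb (memb t) f (Set.Ioi 0)]
  have substInt : ∀ (t : ℝ) (f : ℝ → Y),
      IntegrableOn (fun τ => f (t - τ)) (Set.Ioi (0:ℝ)) → IntegrableOn f (Set.Iic t) := by
    intro t f hf
    have h1 : IntegrableOn f (Set.Iio t) := by
      rw [← himg t]
      exact (((mp t).restrict_image_emb (memb t) (Set.Ioi 0)).integrable_comp_emb (memb t)).mp hf
    rwa [IntegrableOn, Measure.restrict_congr_set Iio_ae_eq_Iic] at h1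
  -- the integrand in the Ioi-form
  have Fcont : ∀ t : ℝ, ContinuousOn (fun τ => TY τ (h (t - τ))) (Set.Ioi (0:ℝ)) := by
    intro t
    have := TYjoint (fun τ => h (t - τ)) (hh.comp (continuous_const.sub continuous_id))
      (fun σ => σ) continuous_id
    exact this
  have Fmeas : ∀ t : ℝ, AEStronglyMeasurable (fun τ => TY τ (h (t - τ)))
      (volume.restrict (Set.Ioi 0)) :=
    fun t => (Fcont t).aestronglyMeasurable measurableSet_Ioi
  have Fbound : ∀ t : ℝ, ∀ᵐ τ ∂(volume.restrict (Set.Ioi (0:ℝ))),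
      ‖TY τ (h (t - τ))‖ ≤ (M * C) * (τ ^ (-β) * Real.exp (-(δ / 2 * τ))) := by
    intro t
    refine (ae_restrict_iff' measurableSet_Ioi).2 (ae_of_all _ fun τ hτ => ?_)
    refine (hTYnorm τ hτ _).trans ?_
    have hpos : (0:ℝ) ≤ M * τ ^ (-β) * Real.exp (-(δ / 2) * τ) :=
      mul_nonneg (mul_nonneg hM.le (Real.rpow_nonneg (le_of_lt hτ) _)) (Real.exp_nonneg _)
    calc M * τ ^ (-β) * Real.exp (-(δ / 2) * τ) * ‖h (t - τ)‖
        ≤ M * τ ^ (-β) * Real.exp (-(δ / 2) * τ) * C :=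
          mul_le_mul_of_nonneg_left (hC _) hpos
      _ = (M * C) * (τ ^ (-β) * Real.exp (-(δ / 2 * τ))) := by rw [neg_mul]; ring
  have bInt : Integrable (fun τ : ℝ => (M * C) * (τ ^ (-β) * Real.exp (-(δ / 2 * τ))))
      (volume.restrict (Set.Ioi 0)) := hg_int.const_mul (M * C)
  have Fint : ∀ t : ℝ, IntegrableOn (fun τ => TY τ (h (t - τ))) (Set.Ioi (0:ℝ)) :=
    fun t => Integrable.mono' bInt (Fmeas t) (Fbound t)
  have Its : ∀ t : ℝ, IntegrableOn (fun σ => TY (t - σ) (h σ)) (Set.Iic t) := by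
    intro t
    apply substInt t
    simpa [sub_sub_cancel] using Fint t
  -- Part 1 : continuity
  have substEq : ∀ t : ℝ, (∫ s in Set.Iic t, TY (t - s) (h s))
      = ∫ τ in Set.Ioi (0:ℝ), TY τ (h (t - τ)) := by
    intro t
    rw [subst t (fun s => TY (t - s) (h s))]
    exact setIntegral_congr_fun measurableSet_Ioi (fun τ hτ => by simp)
  have part1 : Continuous fun t => ∫ s in Set.Iic t, TY (t - s) (h s) := by
    have hcont : Continuous fun t => ∫ τ in Set.Ioi (0:ℝ), TY τ (h (t - τ)) := by
      apply continuous_of_dominated Fmeas Fbound bInt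
      refine (ae_restrict_iff' measurableSet_Ioi).2 (ae_of_all _ fun τ hτ => ?_)
      exact (TY τ).continuous.comp (hh.comp (continuous_id.sub continuous_const))
    simpa only [← substEq] using hcont
  -- Part 2 : bound
  have hSb : BddAbove (Set.range fun s : ℝ => ‖h s‖) :=
    ⟨C₀, by rintro _ ⟨s, rfl⟩; exact hC₀ s⟩
  have hSle : ∀ s : ℝ, ‖h s‖ ≤ ⨆ s : ℝ, ‖h s‖ := fun s => le_ciSup hSb s
  have part2 : ∀ t : ℝ, ‖∫ s in Set.Iic t, TY (t - s) (h s)‖ ≤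
      (M * (2 / δ) ^ (1 - β) * Real.Gamma (1 - β)) * ⨆ s : ℝ, ‖h s‖ := by
    intro t
    set S : ℝ := ⨆ s : ℝ, ‖h s‖ with hS_def
    rw [substEq t]
    calc ‖∫ τ in Set.Ioi (0:ℝ), TY τ (h (t - τ))‖
        ≤ ∫ τ in Set.Ioi (0:ℝ), (M * S) * (τ ^ (-β) * Real.exp (-(δ / 2 * τ))) := by
          apply norm_integral_le_of_norm_le (hg_int.const_mul (M * S))
          refine (ae_restrict_iff' measurableSet_Ioi).2 (ae_of_all _ fun τ hτ => ?_)
          refine (hTYnorm τ hτ _).trans ?_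
          have hpos : (0:ℝ) ≤ M * τ ^ (-β) * Real.exp (-(δ / 2) * τ) :=
            mul_nonneg (mul_nonneg hM.le (Real.rpow_nonneg (le_of_lt hτ) _)) (Real.exp_nonneg _)
          calc M * τ ^ (-β) * Real.exp (-(δ / 2) * τ) * ‖h (t - τ)‖
              ≤ M * τ ^ (-β) * Real.exp (-(δ / 2) * τ) * S :=
                mul_le_mul_of_nonneg_left (hSle _) hpos
            _ = (M * S) * (τ ^ (-β) * Real.exp (-(δ / 2 * τ))) := by rw [neg_mul]; ring
      _ = (M * S) * ((2 / δ) ^ (1 - β) * Real.Gamma (1 - β)) := by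
          rw [integral_const_mul, hg_val]
      _ = (M * (2 / δ) ^ (1 - β) * Real.Gamma (1 - β)) * S := by ring
  refine ⟨part1, part2, ?_⟩
  -- Part 3 : mild solution property
  intro s t hst
  rcases eq_or_lt_of_le hst with rfl | hlt
  · simp [hT0]
  · have hjInt_t : IntegrableOn (fun σ => j (TY (t - σ) (h σ))) (Set.Iic t) :=
      j.integrable_comp (Its t)
    have step1 : j (∫ σ in Set.Iic t, TY (t - σ) (h σ))
        = ∫ σ in Set.Iic t, j (TY (t - σ) (h σ)) :=
      (ContinuousLinearMap.integral_comp_comm j (Its t)).symm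
    have disj : Disjoint (Set.Iic s) (Set.Ioc s t) := by
      rw [Set.disjoint_left]
      intro σ h1 h2
      exact absurd h1 (not_le.2 h2.1)
    have hsplit : (∫ σ in Set.Iic t, j (TY (t - σ) (h σ)))
        = (∫ σ in Set.Iic s, j (TY (t - σ) (h σ)))
          + ∫ σ in Set.Ioc s t, j (TY (t - σ) (h σ)) := by
      rw [← Set.Iic_union_Ioc_eq_Iic hst,
        setIntegral_union disj measurableSet_Ioc
          (hjInt_t.mono_set (fun σ hσ => le_trans hσ hst))
          (hjInt_t.mono_set (fun σ hσ => hσ.2))]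
    have term1 : (∫ σ in Set.Iic s, j (TY (t - σ) (h σ)))
        = T (t - s) (j (∫ σ in Set.Iic s, TY (s - σ) (h σ))) := by
      have e1 : j (∫ σ in Set.Iic s, TY (s - σ) (h σ))
          = ∫ σ in Set.Iic s, j (TY (s - σ) (h σ)) :=
        (ContinuousLinearMap.integral_comp_comm j (Its s)).symm
      rw [e1, ← ContinuousLinearMap.integral_comp_comm (T (t - s))
        (j.integrable_comp (Its s))]
      rw [integral_Iic_eq_integral_Iio, integral_Iic_eq_integral_Iio]
      refine setIntegral_congr_fun measurableSet_Iio fun σ hσ => ?_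
      have hσs : σ < s := hσ
      have h1 : (0:ℝ) < s - σ := sub_pos.2 hσs
      have h2 : (0:ℝ) < t - σ := by linarith
      rw [hjTY _ h1, hjTY _ h2]
      have hs2 := hTsemi (t - s) (by linarith) (s - σ) (by linarith)
      rw [show t - s + (s - σ) = t - σ by ring] at hs2
      rw [hs2]
      rfl
    have term2 : (∫ σ in Set.Ioc s t, j (TY (t - σ) (h σ)))
        = ∫ σ in s..t, T (t - σ) (h σ) := by
      have e2 : (∫ σ in Set.Ioc s t, j (TY (t - σ) (h σ)))
          = ∫ σ in Set.Ioo s t, j (TY (t - σ) (h σ)) := by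
        rw [← Measure.restrict_congr_set Ioo_ae_eq_Ioc]
      have e3 : (∫ σ in Set.Ioc s t, T (t - σ) (h σ))
          = ∫ σ in Set.Ioo s t, T (t - σ) (h σ) := by
        rw [← Measure.restrict_congr_set Ioo_ae_eq_Ioc]
      rw [intervalIntegral.integral_of_le hst, e2, e3]
      refine setIntegral_congr_fun measurableSet_Ioo fun σ hσ => ?_
      exact hjTY _ (sub_pos.2 hσ.2) _
    rw [step1, hsplit, term1, term2]
end

section
/- For every u ∈ BC(ℝ, Y), the function Su defined by (Su)(t) := ∫_{−∞}^{t} T(t−s) [ (Bu)(s) + f(s, u(s)) ] ds is a well-defined bounded continuous function from ℝ into Y, and ‖Su‖_{Y,∞} ≤ d(β) ( C₀ ‖u‖_{Y,∞} + ‖f‖_∞ ), where ‖·‖_{Y,∞} is the sup norm on BC(ℝ, Y) and ‖f‖_∞ = sup_{t∈ℝ, y∈Y} ‖f(t,y)‖. -/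
open Filter Topology MeasureTheory

/-- The integral operator `S` is well defined on `BC(ℝ, Y)`:
`(Su)(t) = ∫_{-∞}^t T(t-s) [(Bu)(s) + f(s, u(s))] ds` is a bounded continuous
function from `ℝ` into `Y` with
`‖Su‖_{Y,∞} ≤ d(β) (C₀ ‖u‖_{Y,∞} + ‖f‖_∞)` where `d(β) = M (2/δ)^{1-β} Γ(1-β)`. -/
theorem integral_operator_well_defined {X Y : Type*}
    [NormedAddCommGroup X] [NormedSpace ℂ X] [CompleteSpace X]
    [NormedAddCommGroup Y] [NormedSpace ℂ Y] [CompleteSpace Y]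
    (β M δ C₀ : ℝ) (hβ : β ∈ Set.Ioo (0 : ℝ) 1) (hM : 0 < M) (hδ : 0 < δ)
    (T : ℝ → X →L[ℂ] Y)
    (hTcont : ∀ x : X, ContinuousOn (fun τ => T τ x) (Set.Ioi (0 : ℝ)))
    (hTnorm : ∀ τ > (0 : ℝ), ∀ x : X,
      ‖T τ x‖ ≤ M * τ ^ (-β) * Real.exp (-(δ / 2) * τ) * ‖x‖)
    (B : BoundedContinuousFunction ℝ Y →L[ℂ] BoundedContinuousFunction ℝ X)
    (hB : ‖B‖ ≤ C₀)
    (f : ℝ → Y → X) (hf : Continuous fun p : ℝ × Y => f p.1 p.2)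
    (hfb : ∃ C : ℝ, ∀ (t : ℝ) (y : Y), ‖f t y‖ ≤ C)
    (u : BoundedContinuousFunction ℝ Y) :
    (∀ t : ℝ, IntegrableOn (fun s => T (t - s) (B u s + f s (u s))) (Set.Iic t)) ∧
      Continuous (fun t => ∫ s in Set.Iic t, T (t - s) (B u s + f s (u s))) ∧
      (∀ t : ℝ, ‖∫ s in Set.Iic t, T (t - s) (B u s + f s (u s))‖ ≤
        (M * (2 / δ) ^ (1 - β) * Real.Gamma (1 - β)) *
          (C₀ * ‖u‖ + ⨆ p : ℝ × Y, ‖f p.1 p.2‖)) := by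
  obtain ⟨hβ0, hβ1⟩ := hβ
  obtain ⟨C, hC⟩ := hfb
  set g : ℝ → X := fun s => B u s + f s (u s) with hg
  set F : ℝ := ⨆ p : ℝ × Y, ‖f p.1 p.2‖ with hFdef
  set K : ℝ := C₀ * ‖u‖ + F with hKdef
  have hbdd : BddAbove (Set.range fun p : ℝ × Y => ‖f p.1 p.2‖) :=
    ⟨C, by rintro _ ⟨p, rfl⟩; exact hC p.1 p.2⟩
  have hgK : ∀ s, ‖g s‖ ≤ K := by
    intro s
    have h1 : ‖B u s‖ ≤ C₀ * ‖u‖ := by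
      calc ‖B u s‖ ≤ ‖B u‖ := (B u).norm_coe_le_norm s
        _ ≤ ‖B‖ * ‖u‖ := B.le_opNorm u
        _ ≤ C₀ * ‖u‖ := mul_le_mul_of_nonneg_right hB (norm_nonneg u)
    have h2 : ‖f s (u s)‖ ≤ F := le_ciSup hbdd (s, u s)
    calc ‖g s‖ ≤ ‖B u s‖ + ‖f s (u s)‖ := norm_add_le _ _
      _ ≤ K := add_le_add h1 h2
  have hgcont : Continuous g :=
    (B u).continuous.add (hf.comp (continuous_id.prodMk u.continuous))
  -- the scalar bound function
  set b : ℝ → ℝ := fun τ => M * τ ^ (-β) * Real.exp (-(δ / 2) * τ) * K with hbdef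
  have hbint : IntegrableOn b (Set.Ioi 0) := by
    have h0 : IntegrableOn (fun x : ℝ => x ^ (-β) * Real.exp (-(δ / 2) * x)) (Set.Ioi 0) := by
      simpa [Real.rpow_one] using
        integrableOn_rpow_mul_exp_neg_mul_rpow (s := -β) (p := 1) (b := δ / 2)
          (by linarith) one_pos (by positivity)
    have h1 : IntegrableOn (fun x : ℝ => M * (x ^ (-β) * Real.exp (-(δ / 2) * x)) * K)
        (Set.Ioi 0) := (h0.const_mul M).mul_const K
    refine h1.congr_fun (fun x _ => by simp only [hbdef]; ring) measurableSet_Ioi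
  have hKnn : 0 ≤ K := le_trans (norm_nonneg (g 0)) (hgK 0)
  have hbval : ∫ τ in Set.Ioi (0:ℝ), b τ = M * (2 / δ) ^ (1 - β) * Real.Gamma (1 - β) * K := by
    have hev := Real.integral_rpow_mul_exp_neg_mul_Ioi (a := 1 - β) (r := δ / 2)
      (by linarith) (by positivity)
    have h1 : ∫ τ in Set.Ioi (0:ℝ), b τ
        = (M * K) * ∫ t in Set.Ioi (0:ℝ), t ^ (1 - β - 1) * Real.exp (-(δ / 2 * t)) := by
      rw [← integral_const_mul]
      refine setIntegral_congr_fun measurableSet_Ioi (fun τ hτ => ?_)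
      have h2 : (1 : ℝ) - β - 1 = -β := by ring
      rw [h2, ← neg_mul]
      simp only [hbdef]
      ring
    rw [h1, hev]
    have : (1 : ℝ) / (δ / 2) = 2 / δ := by field_simp
    rw [this]; ring
  -- change of variables machinery
  have hmp : ∀ t : ℝ, MeasurePreserving (fun s : ℝ => t - s) volume volume :=
    fun t => Measure.measurePreserving_sub_left volume t
  have hemb : ∀ t : ℝ, MeasurableEmbedding (fun s : ℝ => t - s) :=
    fun t => (MeasurableEquiv.subLeft t).measurableEmbedding
  have hpre : ∀ t : ℝ, (fun s : ℝ => t - s) ⁻¹' Set.Ioi 0 = Set.Iio t := by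
    intro t; ext s; simp [sub_pos]
  -- joint continuity of τ ↦ T τ (g (c - τ)) on Ioi 0
  have hjoint : ∀ c : ℝ, ContinuousOn (fun τ => T τ (g (c - τ))) (Set.Ioi (0:ℝ)) := by
    intro c τ₀ hτ₀
    have hτ₀' : (0:ℝ) < τ₀ := hτ₀
    have key : Tendsto (fun τ => T τ (g (c - τ))) (nhds τ₀) (nhds (T τ₀ (g (c - τ₀)))) := by
      have h2 : Tendsto (fun τ => T τ (g (c - τ₀))) (nhds τ₀) (nhds (T τ₀ (g (c - τ₀)))) :=
        ((hTcont (g (c - τ₀))).continuousAt (Ioi_mem_nhds hτ₀')).tendsto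
      have h1 : Tendsto (fun τ => T τ (g (c - τ) - g (c - τ₀))) (nhds τ₀) (nhds 0) := by
        have hbound : Tendsto
            (fun τ => M * τ ^ (-β) * Real.exp (-(δ / 2) * τ) * ‖g (c - τ) - g (c - τ₀)‖)
            (nhds τ₀) (nhds (M * τ₀ ^ (-β) * Real.exp (-(δ / 2) * τ₀) * 0)) := by
          apply Tendsto.mul
          · apply Tendsto.mul
            · exact tendsto_const_nhds.mul
                (Real.continuousAt_rpow_const τ₀ (-β) (Or.inl (ne_of_gt hτ₀')))
            · exact ((Real.continuous_exp.comp (continuous_const.mul continuous_id)).tendsto τ₀)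
          · have : Tendsto (fun τ => ‖g (c - τ) - g (c - τ₀)‖) (nhds τ₀)
                (nhds ‖g (c - τ₀) - g (c - τ₀)‖) :=
              (((hgcont.comp (continuous_const.sub continuous_id)).sub continuous_const).norm).tendsto τ₀
            simpa using this
        rw [mul_zero] at hbound
        apply squeeze_zero_norm' _ hbound
        filter_upwards [Ioi_mem_nhds hτ₀'] with τ hτ
        exact hTnorm τ hτ _
      have := h1.add h2
      rw [zero_add] at this
      refine this.congr (fun τ => ?_)
      rw [← ContinuousLinearMap.map_add]
      congr 1
      abel
    exact ContinuousAt.continuousWithinAt key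
  -- integrability on Ioi 0 for each t
  have hIoi : ∀ t : ℝ, IntegrableOn (fun τ => T τ (g (t - τ))) (Set.Ioi (0:ℝ)) := by
    intro t
    refine hbint.mono' ((hjoint t).aestronglyMeasurable measurableSet_Ioi) ?_
    refine (ae_restrict_iff' measurableSet_Ioi).2 (ae_of_all _ fun τ hτ => ?_)
    calc ‖T τ (g (t - τ))‖ ≤ M * τ ^ (-β) * Real.exp (-(δ / 2) * τ) * ‖g (t - τ)‖ :=
          hTnorm τ hτ _
      _ ≤ b τ := by
          apply mul_le_mul_of_nonneg_left (hgK _)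
          have : (0:ℝ) < τ := hτ
          positivity
  -- transfer to Iio t
  have hIio : ∀ t : ℝ, IntegrableOn (fun s => T (t - s) (g s)) (Set.Iio t) := by
    intro t
    have := ((hmp t).integrableOn_comp_preimage (hemb t)).2 (hIoi t)
    rw [hpre t] at this
    refine this.congr_fun (fun s _ => ?_) measurableSet_Iio
    simp [sub_sub_cancel]
  have hIic : ∀ t : ℝ, IntegrableOn (fun s => T (t - s) (g s)) (Set.Iic t) :=
    fun t => (integrableOn_Iic_iff_integrableOn_Iio).2 (hIio t)
  -- representation of the integral
  have hrepr : ∀ t : ℝ, ∫ s in Set.Iic t, T (t - s) (g s)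
      = ∫ τ in Set.Ioi (0:ℝ), T τ (g (t - τ)) := by
    intro t
    rw [setIntegral_congr_set (Iio_ae_eq_Iic (a := t)).symm]
    have := (hmp t).setIntegral_preimage_emb (hemb t) (fun τ => T τ (g (t - τ))) (Set.Ioi 0)
    rw [hpre t] at this
    rw [← this]
    refine setIntegral_congr_fun measurableSet_Iio (fun s _ => ?_)
    simp [sub_sub_cancel]
  refine ⟨hIic, ?_, ?_⟩
  · -- continuity
    have : Continuous fun t => ∫ τ in Set.Ioi (0:ℝ), T τ (g (t - τ)) := by
      apply continuous_of_dominated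
        (fun t => (hjoint t).aestronglyMeasurable measurableSet_Ioi)
        (fun t => (ae_restrict_iff' measurableSet_Ioi).2 (ae_of_all _ fun τ hτ => ?_)) hbint
        (ae_of_all _ fun τ => ?_)
      · calc ‖T τ (g (t - τ))‖ ≤ M * τ ^ (-β) * Real.exp (-(δ / 2) * τ) * ‖g (t - τ)‖ :=
            hTnorm τ hτ _
          _ ≤ b τ := by
            apply mul_le_mul_of_nonneg_left (hgK _)
            have : (0:ℝ) < τ := hτ
            positivity
      · exact (T τ).continuous.comp (hgcont.comp (continuous_id.sub continuous_const))
    refine this.congr (fun t => (hrepr t).symm)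
  · -- the bound
    intro t
    rw [hrepr t]
    calc ‖∫ τ in Set.Ioi (0:ℝ), T τ (g (t - τ))‖ ≤ ∫ τ in Set.Ioi (0:ℝ), b τ := by
          apply norm_integral_le_of_norm_le hbint
          refine (ae_restrict_iff' measurableSet_Ioi).2 (ae_of_all _ fun τ hτ => ?_)
          calc ‖T τ (g (t - τ))‖ ≤ M * τ ^ (-β) * Real.exp (-(δ / 2) * τ) * ‖g (t - τ)‖ :=
              hTnorm τ hτ _
            _ ≤ b τ := by
              apply mul_le_mul_of_nonneg_left (hgK _)
              have : (0:ℝ) < τ := hτ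
              positivity
      _ = M * (2 / δ) ^ (1 - β) * Real.Gamma (1 - β) * K := hbval
end
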